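/- arXiv:1805.01878 — 3 statements merged into one kernel-verified Lean document; each statement's English description precedes it below -/
import Mathlib

section
/- For each fixed cut-off value u_c in (0,1), each KPP reaction function f, and each speed v ≥ 0, the profile of a permanent form travelling wave solution with cut-off u_c is unique: if U₁ and U₂ are both permanent form travelling wave solutions with cut-off u_c and the same speed v, then U₁(y) = U₂(y) for all y in ℝ. -/
open Real Filter Topology

/-- A KPP reaction function: `f ∈ C¹`, `f 0 = f 1 = 0`, `f' 0 = 1`, `f' 1 < 0`,
`0 < f u ≤ u` on `(0,1)` and `f u < 0` for `u > 1`. -/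
def IsKPP (f : ℝ → ℝ) : Prop :=
  ContDiff ℝ 1 f ∧ f 0 = 0 ∧ f 1 = 0 ∧ deriv f 0 = 1 ∧ deriv f 1 < 0 ∧
  (∀ u : ℝ, 0 < u → u < 1 → 0 < f u ∧ f u ≤ u) ∧
  (∀ u : ℝ, 1 < u → f u < 0)

/-- The cut-off reaction function: `f_c u = f u` for `u > u_c`, and `0` for `u ≤ u_c`. -/
noncomputable def cutoff (f : ℝ → ℝ) (uc : ℝ) : ℝ → ℝ :=
  fun u => if uc < u then f u else 0

/-- A permanent form travelling wave solution with cut-off `uc` and speed `v`. -/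
def IsPTW (f : ℝ → ℝ) (uc v : ℝ) (U : ℝ → ℝ) : Prop :=
  ContDiff ℝ 1 U ∧
  (∀ y : ℝ, y ≠ 0 → ContDiffAt ℝ 2 U y) ∧
  (∀ y : ℝ, y ≠ 0 → deriv (deriv U) y + v * deriv U y + cutoff f uc (U y) = 0) ∧
  U 0 = uc ∧
  (∀ y : ℝ, y < 0 → uc ≤ U y ∧ U y ≤ 1) ∧
  (∀ y : ℝ, 0 < y → 0 ≤ U y ∧ U y ≤ uc) ∧
  Tendsto U atBot (𝓝 1) ∧
  Tendsto U atTop (𝓝 0)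


/-!
For `y > 0` the cut-off switches the reaction off, so `U' + v U` is constant there; as `U → 0`
at `+∞`, `U'` has a limit, which must be `0`. This pins down `U'(0) = -v u_c` and
`U = u_c e^{-v y}` on `[0, ∞)`, and forces `v ≠ 0`.

For `y < 0` one has `U > u_c`: at a point `y₀ < 0` with `U y₀ = u_c` we get `U'(y₀) = 0` (a
minimum), and `e^{v y} U'` is nonincreasing on `(-∞, 0]` because `f_c ≥ 0` on `[u_c, 1]`; so `U`
is nonincreasing on `[y₀, 0]`, hence constant, contradicting `U'(0) = -v u_c ≠ 0`. Thus on
`(-∞, 0]` both profiles solve `U'' + v U' + f(U) = 0`, whose phase-space field is Lipschitz on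
`[u_c, 1] × ℝ`, with the same Cauchy data at `0`; uniqueness for this first-order system
(integrated backwards from `0`) gives `U₁ = U₂`.
-/

open Set

theorem ContDiffAt.differentiableAt_deriv {𝕜 F : Type*} [NontriviallyNormedField 𝕜]
    [NormedAddCommGroup F] [NormedSpace 𝕜 F] {f : 𝕜 → F} {x : 𝕜} (h : ContDiffAt 𝕜 2 f x) :
    DifferentiableAt 𝕜 (deriv f) x :=
  ((h.fderiv_right (m := 1) (by norm_num)).differentiableAt one_ne_zero).clm_apply
    (differentiableAt_const 1)

theorem eq_of_hasDerivAt_zero_of_continuousOn_Ici {W : ℝ → ℝ} {a x : ℝ}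
    (hc : ContinuousOn W (Ici a)) (hd : ∀ t ∈ Ioi a, HasDerivAt W 0 t) (hx : a ≤ x) :
    W x = W a := by
  have hd' : ∀ t ∈ interior (Ici a), HasDerivWithinAt W 0 (interior (Ici a)) t := by
    rw [interior_Ici]
    exact fun t ht => (hd t ht).hasDerivWithinAt
  exact le_antisymm
    (antitoneOn_of_hasDerivWithinAt_nonpos (convex_Ici a) hc hd' (fun _ _ => le_rfl)
      self_mem_Ici hx hx)
    (monotoneOn_of_hasDerivWithinAt_nonneg (convex_Ici a) hc hd' (fun _ _ => le_rfl)
      self_mem_Ici hx hx)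

theorem eq_zero_of_tendsto_of_tendsto_deriv {f : ℝ → ℝ} {a b : ℝ} (hf : Differentiable ℝ f)
    (hlim : Tendsto f atTop (𝓝 a)) (hlim' : Tendsto (deriv f) atTop (𝓝 b)) : b = 0 := by
  choose ξ hξ hslope using fun x : ℝ =>
    exists_deriv_eq_slope f (lt_add_one x) hf.continuous.continuousOn
      fun y _ => (hf y).differentiableWithinAt
  have hξ_top : Tendsto ξ atTop atTop := tendsto_atTop_mono (fun x => (hξ x).1.le) tendsto_id
  have hincr : Tendsto (fun x => f (x + 1) - f x) atTop (𝓝 (a - a)) :=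
    (hlim.comp (tendsto_atTop_add_const_right _ 1 tendsto_id)).sub hlim
  have hslope' : Tendsto (fun x => f (x + 1) - f x) atTop (𝓝 b) :=
    (hlim'.comp hξ_top).congr fun x => by simp [hslope x]
  simpa using tendsto_nhds_unique hslope' hincr

def phaseField (g : ℝ → ℝ) (v : ℝ) (p : ℝ × ℝ) : ℝ × ℝ := (p.2, -(v * p.2) - g p.1)

section PhaseField

variable {g : ℝ → ℝ} {v b : ℝ}

theorem lipschitzOnWith_phaseField {K : NNReal} {S : Set ℝ} (hg : LipschitzOnWith K g S) :
    LipschitzOnWith (max 1 (‖v‖₊ + K)) (phaseField g v) (S ×ˢ univ) := by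
  have h := LipschitzWith.prod_snd.lipschitzOnWith.prodMk
    ((((lipschitzWith_smul v).comp LipschitzWith.prod_snd).neg.lipschitzOnWith).sub
      (hg.comp LipschitzWith.prod_fst.lipschitzOnWith fun _ (hp : _ ∈ S ×ˢ univ) => hp.1))
  rw [mul_one, mul_one] at h
  exact h

theorem hasDerivWithinAt_Iic_phaseField {U : ℝ → ℝ} (hU : ContDiff ℝ 1 U) (hg : Continuous g)
    (hU' : ∀ t < b, HasDerivAt (deriv U) (-(v * deriv U t) - g (U t)) t) {t : ℝ} (ht : t ≤ b) :
    HasDerivWithinAt (fun s => (U s, deriv U s)) (phaseField g v (U t, deriv U t)) (Iic t) t := by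
  have hU'' : HasDerivWithinAt (deriv U) (-(v * deriv U t) - g (U t)) (Iic t) t := by
    rcases ht.lt_or_eq with ht | rfl
    · exact (hU' t ht).hasDerivWithinAt
    · have hcont : Continuous fun x => -(v * deriv U x) - g (U x) :=
        (continuous_const.mul (hU.continuous_deriv le_rfl)).neg.sub (hg.comp hU.continuous)
      refine hasDerivWithinAt_Iic_of_tendsto_deriv (s := Iio t)
        (fun x hx => (hU' x hx).differentiableAt.differentiableWithinAt)
        (hU.continuous_deriv le_rfl).continuousWithinAt self_mem_nhdsWithin ?_
      exact ((hcont.tendsto t).mono_left nhdsWithin_le_nhds).congr'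
        (eventually_nhdsWithin_of_forall fun x hx => ((hU' x hx).deriv).symm)
  exact ((hU.differentiable one_ne_zero t).hasDerivAt.hasDerivWithinAt).prodMk hU''

theorem eqOn_Iic_of_phaseField {K : NNReal} {S : Set ℝ} {U₁ U₂ : ℝ → ℝ} (hg : Continuous g)
    (hK : LipschitzOnWith K g S)
    (hU₁ : ContDiff ℝ 1 U₁)
    (hU₁' : ∀ t < b, HasDerivAt (deriv U₁) (-(v * deriv U₁ t) - g (U₁ t)) t)
    (hS₁ : ∀ t ≤ b, U₁ t ∈ S)
    (hU₂ : ContDiff ℝ 1 U₂)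
    (hU₂' : ∀ t < b, HasDerivAt (deriv U₂) (-(v * deriv U₂ t) - g (U₂ t)) t)
    (hS₂ : ∀ t ≤ b, U₂ t ∈ S)
    (hb : U₁ b = U₂ b) (hb' : deriv U₁ b = deriv U₂ b) : EqOn U₁ U₂ (Iic b) := fun y hy => by
  have hphase := ODE_solution_unique_of_mem_Icc_left (v := fun _ => phaseField g v) (a := y)
    (s := fun _ => S ×ˢ univ) (fun _ _ => lipschitzOnWith_phaseField hK)
    (hU₁.continuous.prodMk (hU₁.continuous_deriv le_rfl)).continuousOn
    (fun t ht => hasDerivWithinAt_Iic_phaseField hU₁ hg hU₁' ht.2)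
    (fun t ht => ⟨hS₁ t ht.2, trivial⟩)
    (hU₂.continuous.prodMk (hU₂.continuous_deriv le_rfl)).continuousOn
    (fun t ht => hasDerivWithinAt_Iic_phaseField hU₂ hg hU₂' ht.2)
    (fun t ht => ⟨hS₂ t ht.2, trivial⟩)
    (Prod.ext hb hb')
  exact congrArg Prod.fst (hphase ⟨le_rfl, hy⟩)

end PhaseField

theorem IsKPP.cutoff_nonneg {f : ℝ → ℝ} (hf : IsKPP f) {uc u : ℝ} (huc : 0 ≤ uc) (hu : u ≤ 1) :
    0 ≤ cutoff f uc u := by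
  obtain ⟨-, -, hf1, -, -, hpos, -⟩ := hf
  unfold cutoff
  split_ifs with hlt
  · rcases hu.lt_or_eq with hu | rfl
    · exact (hpos u (huc.trans_lt hlt) hu).1.le
    · exact hf1.ge
  · exact le_rfl

namespace IsPTW

variable {f : ℝ → ℝ} {uc v : ℝ} {U : ℝ → ℝ}

theorem differentiable (h : IsPTW f uc v U) : Differentiable ℝ U :=
  h.1.differentiable one_ne_zero

theorem continuous_deriv (h : IsPTW f uc v U) : Continuous (deriv U) :=
  h.1.continuous_deriv le_rfl

theorem hasDerivAt_deriv (h : IsPTW f uc v U) {y : ℝ} (hy : y ≠ 0) :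
    HasDerivAt (deriv U) (-(v * deriv U y) - cutoff f uc (U y)) y := by
  obtain ⟨-, hC2, hode, -⟩ := h
  refine (hC2 y hy).differentiableAt_deriv.hasDerivAt.congr_deriv ?_
  linarith [hode y hy]

theorem deriv_add_mul_eq (h : IsPTW f uc v U) {y : ℝ} (hy : 0 ≤ y) :
    deriv U y + v * U y = deriv U 0 + v * uc := by
  obtain ⟨-, -, -, hU0, -, hright, -, -⟩ := id h
  have hW : ∀ t ∈ Ioi (0 : ℝ), HasDerivAt (fun s => deriv U s + v * U s) 0 t := fun t ht => by
    have hcut : cutoff f uc (U t) = 0 := if_neg (not_lt.2 (hright t ht).2)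
    refine ((h.hasDerivAt_deriv (ne_of_gt ht)).add
      ((h.differentiable t).hasDerivAt.const_mul v)).congr_deriv ?_
    rw [hcut]
    ring
  rw [← hU0]
  exact eq_of_hasDerivAt_zero_of_continuousOn_Ici
    (h.continuous_deriv.add (continuous_const.mul h.differentiable.continuous)).continuousOn hW hy

theorem deriv_at_zero (h : IsPTW f uc v U) : deriv U 0 = -(v * uc) := by
  obtain ⟨-, -, -, -, -, -, -, htop⟩ := id h
  have hlim : Tendsto (deriv U) atTop (𝓝 (deriv U 0 + v * uc - v * 0)) :=
    (tendsto_const_nhds.sub (htop.const_mul v)).congr' <| by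
      filter_upwards [eventually_ge_atTop 0] with y hy
      linarith [h.deriv_add_mul_eq hy]
  linarith [eq_zero_of_tendsto_of_tendsto_deriv h.differentiable htop hlim]

theorem eq_mul_exp_of_nonneg (h : IsPTW f uc v U) {y : ℝ} (hy : 0 ≤ y) :
    U y = uc * exp (-(v * y)) := by
  obtain ⟨-, -, -, hU0, -⟩ := id h
  have hW : ∀ t ∈ Ioi (0 : ℝ), HasDerivAt (fun s => exp (v * s) * U s) 0 t := fun t ht => by
    refine (((hasDerivAt_id' t).const_mul v).exp.mul
      (h.differentiable t).hasDerivAt).congr_deriv ?_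
    linear_combination exp (v * t) * (h.deriv_add_mul_eq (le_of_lt ht) + h.deriv_at_zero)
  have hconst : exp (v * y) * U y = exp (v * 0) * U 0 := eq_of_hasDerivAt_zero_of_continuousOn_Ici
    ((continuous_const.mul continuous_id).rexp.mul h.differentiable.continuous).continuousOn hW hy
  rw [mul_zero, exp_zero, one_mul, hU0] at hconst
  rw [exp_neg, ← hconst]
  field_simp

theorem speed_ne_zero (h : IsPTW f uc v U) (huc : uc ≠ 0) : v ≠ 0 := by
  obtain ⟨-, -, -, -, -, -, -, htop⟩ := id h
  rintro rfl
  refine huc (tendsto_nhds_unique ?_ htop)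
  exact tendsto_const_nhds.congr' <| by
    filter_upwards [eventually_ge_atTop 0] with y hy
    simp [h.eq_mul_exp_of_nonneg hy]

theorem antitoneOn_exp_mul_deriv (hf : IsKPP f) (huc : 0 ≤ uc) (h : IsPTW f uc v U) :
    AntitoneOn (fun t => exp (v * t) * deriv U t) (Iic 0) := by
  have hW : ∀ t ∈ interior (Iic (0 : ℝ)), HasDerivWithinAt (fun s => exp (v * s) * deriv U s)
      (-(exp (v * t) * cutoff f uc (U t))) (interior (Iic 0)) t := by
    rw [interior_Iic]
    intro t ht
    exact (((hasDerivAt_id' t).const_mul v).exp.mul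
      (h.hasDerivAt_deriv (ne_of_lt ht))).congr_deriv (by ring) |>.hasDerivWithinAt
  refine antitoneOn_of_hasDerivWithinAt_nonpos (convex_Iic 0)
    ((continuous_const.mul continuous_id).rexp.mul h.continuous_deriv).continuousOn hW ?_
  rw [interior_Iic]
  intro t ht
  exact neg_nonpos.2 (mul_nonneg (exp_pos _).le (hf.cutoff_nonneg huc (h.2.2.2.2.1 t ht).2))

theorem lt_of_neg (hf : IsKPP f) (huc : 0 < uc) (h : IsPTW f uc v U) {y₀ : ℝ} (hy₀ : y₀ < 0) :
    uc < U y₀ := by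
  obtain ⟨-, -, -, hU0, hleft, -, -, -⟩ := id h
  by_contra! hle
  have hUy₀ : U y₀ = uc := le_antisymm hle (hleft y₀ hy₀).1
  have hmin : deriv U y₀ = 0 := IsLocalMin.deriv_eq_zero <| by
    filter_upwards [Iio_mem_nhds hy₀] with z hz
    exact hUy₀ ▸ (hleft z hz).1
  have hU'_nonpos : ∀ t ∈ Icc y₀ 0, deriv U t ≤ 0 := fun t ht => by
    have : exp (v * t) * deriv U t ≤ exp (v * y₀) * deriv U y₀ :=
      h.antitoneOn_exp_mul_deriv hf huc.le hy₀.le ht.2 ht.1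
    rw [hmin, mul_zero] at this
    exact nonpos_of_mul_nonpos_right this (exp_pos _)
  have hU_anti : AntitoneOn U (Icc y₀ 0) :=
    antitoneOn_of_deriv_nonpos (convex_Icc _ _) h.differentiable.continuous.continuousOn
      (fun t _ => (h.differentiable t).differentiableWithinAt)
      (fun t ht => hU'_nonpos t (interior_subset ht))
  have hU_const : EqOn U (fun _ => uc) (Icc y₀ 0) := fun t ht => le_antisymm
    (hUy₀ ▸ hU_anti ⟨le_rfl, hy₀.le⟩ ht ht.1) (hU0 ▸ hU_anti ht ⟨hy₀.le, le_rfl⟩ ht.2)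
  have hderiv0 : deriv U 0 = 0 := by
    rw [← (h.differentiable 0).derivWithin (uniqueDiffOn_Icc hy₀ 0 ⟨hy₀.le, le_rfl⟩),
      derivWithin_congr hU_const (hU_const ⟨hy₀.le, le_rfl⟩), derivWithin_fun_const,
      Pi.zero_apply]
  rw [h.deriv_at_zero] at hderiv0
  exact h.speed_ne_zero huc.ne' (by simpa [huc.ne'] using hderiv0)

theorem hasDerivAt_deriv_of_neg (hf : IsKPP f) (huc : 0 < uc) (h : IsPTW f uc v U) {t : ℝ}
    (ht : t < 0) : HasDerivAt (deriv U) (-(v * deriv U t) - f (U t)) t := by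
  simpa only [cutoff, if_pos (h.lt_of_neg hf huc ht)] using h.hasDerivAt_deriv (ne_of_lt ht)

theorem mem_Icc_of_nonpos (huc : uc ≤ 1) (h : IsPTW f uc v U) {t : ℝ} (ht : t ≤ 0) :
    U t ∈ Icc uc 1 := by
  obtain ⟨-, -, -, hU0, hleft, -, -, -⟩ := h
  rcases ht.lt_or_eq with ht | rfl
  · exact hleft t ht
  · rw [hU0]
    exact ⟨le_rfl, huc⟩

end IsPTW

theorem ptw_profile_unique_general (f : ℝ → ℝ) (hf : IsKPP f) (uc : ℝ) (huc : uc ∈ Set.Ioo (0:ℝ) 1)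
    (v : ℝ) (U₁ U₂ : ℝ → ℝ)
    (h₁ : IsPTW f uc v U₁) (h₂ : IsPTW f uc v U₂) : ∀ y : ℝ, U₁ y = U₂ y := by
  intro y
  rcases le_or_gt y 0 with hy | hy
  · obtain ⟨K, hK⟩ := hf.1.contDiffOn.exists_lipschitzOnWith one_ne_zero (convex_Icc uc 1)
      isCompact_Icc
    exact eqOn_Iic_of_phaseField hf.1.continuous hK
      h₁.1 (fun _ => h₁.hasDerivAt_deriv_of_neg hf huc.1) (fun _ => h₁.mem_Icc_of_nonpos huc.2.le)
      h₂.1 (fun _ => h₂.hasDerivAt_deriv_of_neg hf huc.1) (fun _ => h₂.mem_Icc_of_nonpos huc.2.le)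
      (h₁.2.2.2.1.trans h₂.2.2.2.1.symm) (h₁.deriv_at_zero.trans h₂.deriv_at_zero.symm) hy
  · rw [h₁.eq_mul_exp_of_nonneg hy.le, h₂.eq_mul_exp_of_nonneg hy.le]

/-- Uniqueness of the profile of permanent form travelling waves at a fixed speed. -/
theorem ptw_profile_unique (f : ℝ → ℝ) (hf : IsKPP f) (uc : ℝ) (huc : uc ∈ Set.Ioo (0:ℝ) 1)
    (v : ℝ) (hv : 0 ≤ v) (U₁ U₂ : ℝ → ℝ)
    (h₁ : IsPTW f uc v U₁) (h₂ : IsPTW f uc v U₂) : ∀ y : ℝ, U₁ y = U₂ y :=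
  ptw_profile_unique_general f hf uc huc v U₁ U₂ h₁ h₂
end

section
/- Let u_c be in (0,1), let f be a KPP reaction function, and let U be a permanent form travelling wave solution with cut-off u_c and speed v > 0. Then U is strictly monotone decreasing on ℝ; in fact U'(y) < 0 for all y in ℝ, and 0 < U(y) < 1 for all y in ℝ. -/
open Real Filter Topology

/-! The weighted slope `e^{v y} U'(y)` is nonincreasing, because its derivative is
`-e^{v y} f_c(U y) ≤ 0`. So if `U'(y) ≥ 0` somewhere, then `U' ≥ 0` on `(-∞, y]`, and since
`U → 1` at `-∞` while `U ≤ 1` on `y < 0`, `U ≡ 1` on a half-line, where also `U' = 0`. Near `U = 1`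
the cut-off is inactive and `f` is `C¹`, so by uniqueness for the ODE `(U, U')` cannot leave the
rest point `(1, 0)`; by connectedness it stays there on all of `(-∞, 0)`, and continuity gives
`U 0 = 1 ≠ u_c`. Hence `U' < 0`, and `0 < U < 1` follows from the limits at `±∞`. -/

open Set

lemma IsPreconnected.forall_eq_of_eventually_eq {X Y : Type*} [TopologicalSpace X]
    [TopologicalSpace Y] [T1Space Y] {s : Set X} (hs : IsPreconnected s) {Φ : X → Y}
    (hΦ : Continuous Φ) {c : Y} (hloc : ∀ x ∈ s, Φ x = c → ∀ᶠ y in 𝓝 x, Φ y = c)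
    {x₀ : X} (hx₀ : x₀ ∈ s) (h₀ : Φ x₀ = c) : ∀ x ∈ s, Φ x = c := by
  set u : Set X := {x | ∀ᶠ y in 𝓝 x, Φ y = c}
  have hclosure : closure u ⊆ Φ ⁻¹' {c} :=
    closure_minimal (fun _ hx => hx.self_of_nhds) (isClosed_singleton.preimage hΦ)
  have hsu : s ⊆ u := hs.subset_of_closure_inter_subset isOpen_setOfPred_eventually_nhds
    ⟨x₀, hx₀, hloc x₀ hx₀ h₀⟩ fun x ⟨hxu, hxs⟩ => hloc x hxs (hclosure hxu)
  exact fun x hx => (hsu hx).self_of_nhds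

lemma antitone_of_hasDerivAt_nonpos_of_ne {φ φ' : ℝ → ℝ} {a : ℝ} (hφ : Continuous φ)
    (hφ' : ∀ x ≠ a, HasDerivAt φ (φ' x) x) (hφ'₀ : ∀ x ≠ a, φ' x ≤ 0) : Antitone φ := by
  refine AntitoneOn.Iic_union_Ici (a := a) ?_ ?_
  · refine antitoneOn_of_hasDerivWithinAt_nonpos (convex_Iic a) hφ.continuousOn
      (fun x hx => (hφ' x ?_).hasDerivWithinAt) fun x hx => hφ'₀ x ?_ <;>
    · rw [interior_Iic] at hx; exact hx.ne
  · refine antitoneOn_of_hasDerivWithinAt_nonpos (convex_Ici a) hφ.continuousOn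
      (fun x hx => (hφ' x ?_).hasDerivWithinAt) fun x hx => hφ'₀ x ?_ <;>
    · rw [interior_Ici] at hx; exact hx.ne'

lemma StrictAnti.mem_Ioo_of_tendsto {U : ℝ → ℝ} {a b : ℝ} (hU : StrictAnti U)
    (hbot : Tendsto U atBot (𝓝 b)) (htop : Tendsto U atTop (𝓝 a)) (y : ℝ) : U y ∈ Ioo a b :=
  ⟨(hU.antitone.le_of_tendsto htop (y + 1)).trans_lt (hU (lt_add_one y)),
    (hU (sub_one_lt y)).trans_le (hU.antitone.ge_of_tendsto hbot (y - 1))⟩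

lemma eventually_eq_of_hasDerivAt_of_rest {f : ℝ → ℝ} {a : ℝ} (hf : ContDiffAt ℝ 1 f a)
    (hfa : f a = 0) {v t₀ : ℝ} {U U' : ℝ → ℝ}
    (hU : ∀ᶠ t in 𝓝 t₀, HasDerivAt U (U' t) t ∧ HasDerivAt U' (-(v * U' t) - f (U t)) t)
    (h₀ : U t₀ = a) (h₀' : U' t₀ = 0) : ∀ᶠ t in 𝓝 t₀, (U t, U' t) = (a, 0) := by
  set W : ℝ × ℝ → ℝ × ℝ := fun q => (q.2, -(v * q.2) - f q.1)
  have hW : ContDiffAt ℝ 1 W (a, 0) :=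
    contDiffAt_snd.prodMk ((contDiffAt_const.mul contDiffAt_snd).neg.sub (hf.comp _ contDiffAt_fst))
  obtain ⟨K, s, hs, hK⟩ := hW.exists_lipschitzOnWith
  have hΦ : Tendsto (fun t => (U t, U' t)) (𝓝 t₀) (𝓝 (a, 0)) := by
    rw [← h₀, ← h₀']
    exact hU.self_of_nhds.1.continuousAt.prodMk hU.self_of_nhds.2.continuousAt
  refine ODE_solution_unique_of_eventually (v := fun _ => W) (s := fun _ => s)
    (Eventually.of_forall fun _ => hK)
    ((hU.and (hΦ.eventually hs)).mono fun t ht => ⟨ht.1.1.prodMk ht.1.2, ht.2⟩)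
    (Eventually.of_forall fun t => ⟨(hasDerivAt_const t (a, 0)).congr_deriv ?_, mem_of_mem_nhds hs⟩)
    (by simp [h₀, h₀'])
  simp [W, hfa, Prod.zero_eq_mk]

section TravellingWave

variable {f : ℝ → ℝ} {uc v : ℝ} {U : ℝ → ℝ}

lemma IsPTW.hasDerivAt (hU : IsPTW f uc v U) (y : ℝ) : HasDerivAt U (deriv U y) y :=
  (hU.1.differentiable one_ne_zero y).hasDerivAt

lemma IsPTW.hasDerivAt_deriv_s10 (hU : IsPTW f uc v U) {y : ℝ} (hy : y ≠ 0) :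
    HasDerivAt (deriv U) (-(v * deriv U y) - cutoff f uc (U y)) y := by
  have h := (((hU.2.1 y hy).derivWithin (m := 1) le_rfl).differentiableAt one_ne_zero).hasDerivAt
  exact h.congr_deriv (by linarith [hU.2.2.1 y hy])

lemma IsPTW.cutoff_nonneg (hf : IsKPP f) (huc : 0 ≤ uc) (hU : IsPTW f uc v U) {y : ℝ}
    (hy : y ≠ 0) : 0 ≤ cutoff f uc (U y) := by
  obtain ⟨-, -, hf1, -, -, hfpos, -⟩ := hf
  obtain ⟨-, -, -, -, hleft, hright, -⟩ := hU
  unfold cutoff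
  split_ifs with hcut
  · rcases hy.lt_or_gt with hy | hy
    · rcases (hleft y hy).2.lt_or_eq with h1 | h1
      · exact (hfpos _ (huc.trans_lt hcut) h1).1.le
      · rw [h1, hf1]
    · exact absurd (hright y hy).2 (not_le.2 hcut)
  · exact le_rfl

lemma IsPTW.antitone_exp_mul_deriv (hf : IsKPP f) (huc : 0 ≤ uc) (hU : IsPTW f uc v U) :
    Antitone fun y => exp (v * y) * deriv U y := by
  refine antitone_of_hasDerivAt_nonpos_of_ne (a := 0)
    (φ' := fun y => -(exp (v * y) * cutoff f uc (U y)))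
    (by have := hU.1.continuous_deriv le_rfl; fun_prop) (fun y hy => ?_)
    fun y hy => neg_nonpos.2 (mul_nonneg (exp_pos _).le (hU.cutoff_nonneg hf huc hy))
  have hexp : HasDerivAt (fun y => exp (v * y)) (exp (v * y) * v) y :=
    ((hasDerivAt_id y).const_mul v).exp.congr_deriv (by simp)
  exact (hexp.mul (hU.hasDerivAt_deriv_s10 hy)).congr_deriv (by ring)

lemma IsPTW.eventually_eq_one (hf : IsKPP f) (huc : uc < 1) (hU : IsPTW f uc v U) {t : ℝ}
    (ht : t < 0) (h₀ : (U t, deriv U t) = (1, 0)) :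
    ∀ᶠ y in 𝓝 t, (U y, deriv U y) = (1, 0) := by
  obtain ⟨hUt, hU't⟩ := Prod.mk.inj h₀
  have hnear : ∀ᶠ y in 𝓝 t, y ≠ 0 ∧ uc < U y :=
    (eventually_ne_nhds ht.ne).and
      (hU.1.continuous.continuousAt.eventually (eventually_gt_nhds (hUt ▸ huc)))
  refine eventually_eq_of_hasDerivAt_of_rest (v := v) hf.1.contDiffAt hf.2.2.1 ?_ hUt hU't
  filter_upwards [hnear] with y ⟨hy, hcut⟩
  exact ⟨hU.hasDerivAt y, by simpa [cutoff, hcut] using hU.hasDerivAt_deriv_s10 hy⟩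

lemma IsPTW.deriv_neg (hf : IsKPP f) (huc : uc ∈ Ioo 0 1) (hU : IsPTW f uc v U) (y : ℝ) :
    deriv U y < 0 := by
  by_contra! hy
  have hφ := hU.antitone_exp_mul_deriv hf huc.1.le
  obtain ⟨hC1, -, -, hU0, hleft, -, hbot, -⟩ := id hU
  have hmono : MonotoneOn U (Iic y) := by
    refine monotoneOn_of_deriv_nonneg (convex_Iic y) hC1.continuous.continuousOn
      (hC1.differentiable one_ne_zero).differentiableOn fun z hz => ?_
    rw [interior_Iic] at hz
    exact (mul_nonneg_iff_of_pos_left (exp_pos _)).1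
      ((mul_nonneg (exp_pos _).le hy).trans (hφ hz.le))
  have hge : ∀ z ≤ y, 1 ≤ U z := fun z hz => le_of_tendsto hbot <| by
    filter_upwards [eventually_le_atBot z] with w hw
    exact hmono (hw.trans hz) hz hw
  set x₀ := min y 0 - 1
  have hx₀ : x₀ < 0 := by linarith [min_le_right y 0]
  have hUx₀ : U x₀ = 1 := le_antisymm (hleft x₀ hx₀).2 (hge x₀ (by linarith [min_le_left y 0]))
  have hU'x₀ : deriv U x₀ = 0 := IsLocalMax.deriv_eq_zero <| by
    filter_upwards [Iio_mem_nhds hx₀] with z hz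
    exact hUx₀ ▸ (hleft z hz).2
  have hrest := isPreconnected_Iio.forall_eq_of_eventually_eq
    (hC1.continuous.prodMk (hC1.continuous_deriv le_rfl))
    (fun _ ht => hU.eventually_eq_one hf huc.2 ht) hx₀ (by rw [hUx₀, hU'x₀])
  have hU_left : Tendsto U (𝓝[<] 0) (𝓝 1) :=
    tendsto_const_nhds.congr' <| eventually_nhdsWithin_of_forall fun z hz =>
      (Prod.mk.inj (hrest z hz)).1.symm
  have := tendsto_nhds_unique (hC1.continuous.continuousAt.continuousWithinAt) hU_left
  linarith [huc.2]

end TravellingWave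

theorem ptw_strict_decreasing_general (f : ℝ → ℝ) (hf : IsKPP f) (uc : ℝ) (huc : uc ∈ Set.Ioo (0:ℝ) 1)
    (v : ℝ) (U : ℝ → ℝ) (hU : IsPTW f uc v U) :
    StrictAnti U ∧ (∀ y : ℝ, deriv U y < 0) ∧ (∀ y : ℝ, 0 < U y ∧ U y < 1) := by
  have hderiv := hU.deriv_neg hf huc
  have hanti := strictAnti_of_deriv_neg hderiv
  exact ⟨hanti, hderiv, hanti.mem_Ioo_of_tendsto hU.2.2.2.2.2.2.1 hU.2.2.2.2.2.2.2⟩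

/-- The PTW profile is strictly decreasing, with negative derivative, and `0 < U < 1`. -/
theorem ptw_strict_decreasing (f : ℝ → ℝ) (hf : IsKPP f) (uc : ℝ) (huc : uc ∈ Set.Ioo (0:ℝ) 1)
    (v : ℝ) (hv : 0 < v) (U : ℝ → ℝ) (hU : IsPTW f uc v U) :
    StrictAnti U ∧ (∀ y : ℝ, deriv U y < 0) ∧ (∀ y : ℝ, 0 < U y ∧ U y < 1) :=
  ptw_strict_decreasing_general f hf uc huc v U hU
end

section
/- Let u_c be in (0,1) and let f be a KPP reaction function. Then there is no permanent form travelling wave solution with cut-off u_c and speed v = 0. -/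
open Real Filter Topology

/-!
Ahead of the front (`y > 0`) the wave stays below the cut-off, so with `v = 0` the equation
reduces to `U'' = 0` there and `U` is affine on `(0, ∞)`. An affine function with a finite limit
at `+∞` is constant, so `U = 0` on `(0, ∞)`, and continuity at `0` forces `u_c = U 0 = 0`.
-/

open Set

theorem cutoff_of_le {f : ℝ → ℝ} {uc u : ℝ} (h : u ≤ uc) : cutoff f uc u = 0 :=
  if_neg h.not_gt

theorem exists_eqOn_affine_of_deriv_deriv_eq_zero {U : ℝ → ℝ} {s : Set ℝ} (hs : IsOpen s)
    (hs' : IsPreconnected s) (hU : DifferentiableOn ℝ U s)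
    (hU' : DifferentiableOn ℝ (deriv U) s) (hU'' : s.EqOn (deriv (deriv U)) 0) :
    ∃ c d : ℝ, s.EqOn U (fun y => c * y + d) := by
  obtain ⟨c, hc⟩ := hs.exists_is_const_of_deriv_eq_zero hs' hU' hU''
  obtain ⟨d, hd⟩ := hs.exists_eq_add_of_deriv_eq hs' hU
    ((differentiable_id.const_mul c).differentiableOn) (g := fun y => c * y)
    (fun y hy => by simp [hc y hy])
  exact ⟨c, d, hd⟩

theorem eq_zero_and_eq_of_tendsto_affine {c d L : ℝ}
    (h : Tendsto (fun y => c * y + d) atTop (𝓝 L)) : c = 0 ∧ d = L := by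
  have hshift : Tendsto (fun y => c * (y + 1) + d) atTop (𝓝 L) :=
    h.comp (tendsto_atTop_add_const_right atTop 1 tendsto_id)
  have hc : c = 0 := by
    have hdiff := hshift.sub h
    simp only [mul_add, mul_one, add_sub_add_right_eq_sub, add_sub_cancel_left, sub_self] at hdiff
    exact tendsto_nhds_unique tendsto_const_nhds hdiff
  subst hc
  exact ⟨rfl, by simpa using h⟩

theorem IsPTW.eqOn_deriv_deriv_Ioi {f : ℝ → ℝ} {uc : ℝ} {U : ℝ → ℝ} (hU : IsPTW f uc 0 U) :
    (Ioi 0).EqOn (deriv (deriv U)) 0 := by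
  obtain ⟨-, -, hode, -, -, hbelow, -, -⟩ := hU
  intro y hy
  have hy' := hode y (ne_of_gt hy)
  rwa [cutoff_of_le (hbelow y hy).2, zero_mul, add_zero, add_zero] at hy'

theorem IsPTW.eqOn_zero_Ioi {f : ℝ → ℝ} {uc : ℝ} {U : ℝ → ℝ} (hU : IsPTW f uc 0 U) :
    (Ioi 0).EqOn U 0 := by
  have hU'' := hU.eqOn_deriv_deriv_Ioi
  obtain ⟨hC1, hC2, -, -, -, -, -, htop⟩ := hU
  obtain ⟨c, d, hcd⟩ := exists_eqOn_affine_of_deriv_deriv_eq_zero isOpen_Ioi isPreconnected_Ioi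
    (hC1.differentiable one_ne_zero).differentiableOn
    (fun y hy => (((hC2 y (ne_of_gt hy)).derivWithin (m := 1) (by norm_num)).differentiableAt
      one_ne_zero).differentiableWithinAt)
    hU''
  have haff : Tendsto (fun y => c * y + d) atTop (𝓝 0) :=
    htop.congr' (eventually_of_mem (Ioi_mem_atTop 0) hcd)
  obtain ⟨rfl, rfl⟩ := eq_zero_and_eq_of_tendsto_affine haff
  exact fun y hy => by simpa using hcd hy

theorem ptw_no_zero_speed_general (f : ℝ → ℝ) (uc : ℝ)
    (huc : uc ∈ Set.Ioo (0:ℝ) 1) :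
    ∀ U : ℝ → ℝ, ¬ IsPTW f uc 0 U := by
  intro U hU
  have hzero : Tendsto U (𝓝[>] 0) (𝓝 0) :=
    tendsto_const_nhds.congr' (eventuallyEq_nhdsWithin_of_eqOn hU.eqOn_zero_Ioi).symm
  obtain ⟨hC1, -, -, hU0, -⟩ := hU
  have hright : Tendsto U (𝓝[>] 0) (𝓝 uc) :=
    hU0 ▸ hC1.continuous.continuousAt.tendsto.mono_left nhdsWithin_le_nhds
  exact huc.1.ne' (tendsto_nhds_unique hright hzero)

/-- There is no permanent form travelling wave with speed `v = 0`. -/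
theorem ptw_no_zero_speed (f : ℝ → ℝ) (hf : IsKPP f) (uc : ℝ)
    (huc : uc ∈ Set.Ioo (0:ℝ) 1) :
    ∀ U : ℝ → ℝ, ¬ IsPTW f uc 0 U :=
  ptw_no_zero_speed_general f uc huc
end
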